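/- arXiv:2601.08150 — 2 statements merged into one kernel-verified Lean document; each statement's English description precedes it below -/
import Mathlib

section
/- For all integers c ≥ 1 and p ≥ 2, the number of cyclic volume integer flows of the graph H_{c,p} equals the multinomial coefficient ((c+1)(p−1))! / ((p−1)!)^{c+1}. In particular, H_{1,p} has exactly binom(2p−2, p−1) cyclic volume integer flows, and H_{c,2} has exactly (c+1)! of them. -/
namespace PaperDKK

/-- Edge colours for framings. -/
inductive Col : Type
  | red : Col
  | blue : Col
  deriving DecidableEq

variable {V E : Type*}

/-- The list of vertices visited by a walk. -/
def walkVerts (tl hd : E → V) : List E → List V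
  | [] => []
  | e :: es => tl e :: (e :: es).map hd

/-- A walk: a nonempty list of consecutively composable edges. -/
def IsWalk (tl hd : E → V) (w : List E) : Prop :=
  w ≠ [] ∧ List.Chain' (fun e f => hd e = tl f) w

/-- A source: a vertex that is the head of no edge. -/
def IsSource (tl hd : E → V) (v : V) : Prop := ∀ e : E, hd e ≠ v

/-- A sink: a vertex that is the tail of no edge. -/
def IsSink (tl hd : E → V) (v : V) : Prop := ∀ e : E, tl e ≠ v

/-- An internal vertex: neither a source nor a sink. -/
def IsInternal (tl hd : E → V) (v : V) : Prop :=
  ¬ IsSource tl hd v ∧ ¬ IsSink tl hd v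

/-- A minimal directed cycle: a closed walk visiting no vertex twice. -/
def IsMinCycle (tl hd : E → V) (w : List E) : Prop :=
  IsWalk tl hd w ∧
  (∀ e ∈ w.getLast?, ∀ f ∈ w.head?, hd e = tl f) ∧
  (w.map hd).Nodup

/-- A walk from a source to a sink. -/
def IsSrcSnkWalk (tl hd : E → V) (w : List E) : Prop :=
  IsWalk tl hd w ∧
  (∀ e ∈ w.head?, IsSource tl hd (tl e)) ∧
  (∀ e ∈ w.getLast?, IsSink tl hd (hd e))

/-- A route: a minimal directed cycle or a source-to-sink walk. -/
def IsRoute (tl hd : E → V) (w : List E) : Prop :=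
  IsMinCycle tl hd w ∨ IsSrcSnkWalk tl hd w

/-- A good route: a source-to-sink walk none of whose contiguous subwalks is a
minimal directed cycle. -/
def IsGoodRoute (tl hd : E → V) (w : List E) : Prop :=
  IsSrcSnkWalk tl hd w ∧ ∀ u : List E, u <:+: w → ¬ IsMinCycle tl hd u

/-- A monochromatic list of edges. -/
def Mono (col : E → Col) (w : List E) : Prop :=
  ∃ b : Col, ∀ e ∈ w, col e = b

/-- Cyclic ample framing: at every internal vertex there is exactly one red and
one blue incoming edge and exactly one red and one blue outgoing edge, and every
minimal directed cycle is monochromatic. -/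
def CyclicAmpleFraming (tl hd : E → V) (col : E → Col) : Prop :=
  (∀ v : V, IsInternal tl hd v →
    (∃! e : E, hd e = v ∧ col e = Col.red) ∧
    (∃! e : E, hd e = v ∧ col e = Col.blue) ∧
    (∃! e : E, tl e = v ∧ col e = Col.red) ∧
    (∃! e : E, tl e = v ∧ col e = Col.blue)) ∧
  (∀ w : List E, IsMinCycle tl hd w → Mono col w)

/-- Incompatibility of two source-to-sink walks: they admit decompositions
`P·S·Q` and `P′·S·Q′` along a common (possibly vertex-only) subwalk `S`, with
the last edge of `P` and the first edge of `Q′` blue while the first edge of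
`Q` and the last edge of `P′` are red.  Here the `P`-part is `P ++ [p]` and the
`Q`-part is `q :: Q`, so `p` is the last edge of the `P`-part and `q` the first
edge of the `Q`-part. -/
def Incompat (tl hd : E → V) (col : E → Col) (w w' : List E) : Prop :=
  IsSrcSnkWalk tl hd w ∧ IsSrcSnkWalk tl hd w' ∧
  ∃ (P S Q P' Q' : List E) (p q p' q' : E),
    ((w = P ++ p :: (S ++ q :: Q) ∧ w' = P' ++ p' :: (S ++ q' :: Q')) ∨
     (w' = P ++ p :: (S ++ q :: Q) ∧ w = P' ++ p' :: (S ++ q' :: Q'))) ∧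
    hd p = hd p' ∧
    col p = Col.blue ∧ col q' = Col.blue ∧ col q = Col.red ∧ col p' = Col.red

/-- A route is exceptional if it is compatible with every route. -/
def Exceptional (tl hd : E → V) (col : E → Col) (w : List E) : Prop :=
  IsRoute tl hd w ∧ ∀ w' : List E, IsRoute tl hd w' → ¬ Incompat tl hd col w w'

/-- Connectivity of the underlying undirected graph. -/
def Connected (tl hd : E → V) : Prop :=
  ∀ v w : V,
    Relation.ReflTransGen
      (fun x y => ∃ e : E, (tl e = x ∧ hd e = y) ∨ (tl e = y ∧ hd e = x)) v w

/-- Every source and every sink has degree one. -/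
def DegreeOneEnds (tl hd : E → V) : Prop :=
  (∀ v : V, IsSource tl hd v → ∃! e : E, tl e = v) ∧
  (∀ v : V, IsSink tl hd v → ∃! e : E, hd e = v)

/-- No idle edges: no edge between internal vertices is the unique outgoing edge
of its tail or the unique incoming edge of its head. -/
def NoIdleEdges (tl hd : E → V) : Prop :=
  ∀ e : E, IsInternal tl hd (tl e) → IsInternal tl hd (hd e) →
    (∃ f : E, f ≠ e ∧ tl f = tl e) ∧ (∃ f : E, f ≠ e ∧ hd f = hd e)

/-- The edge set of a minimal directed cycle (minimal cycles are identified up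
to cyclic rotation, hence with their edge sets). -/
def IsCycleSet (tl hd : E → V) [DecidableEq E] (C : Finset E) : Prop :=
  ∃ w : List E, IsMinCycle tl hd w ∧ w.toFinset = C

/-- The routes of the graph: minimal directed cycles (up to rotation, i.e. as
edge sets) together with good routes. -/
abbrev RoutesT (tl hd : E → V) [DecidableEq E] : Type _ :=
  {C : Finset E // IsCycleSet tl hd C} ⊕ {w : List E // IsGoodRoute tl hd w}

/-- The indicator flow of a route: how many times the route traverses each edge. -/
def rInd (tl hd : E → V) [DecidableEq E] : RoutesT tl hd → E → ℝ
  | Sum.inl C => fun e => if e ∈ C.1 then 1 else 0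
  | Sum.inr w => fun e => (w.1.count e : ℝ)

/-- Compatibility of routes: minimal cycles are compatible with everything;
two good routes are compatible when they are not incompatible. -/
def RCompat (tl hd : E → V) [DecidableEq E] (col : E → Col) :
    RoutesT tl hd → RoutesT tl hd → Prop
  | Sum.inr w, Sum.inr w' => ¬ Incompat tl hd col w.1 w'.1
  | _, _ => True

/-- A clique: a set of routes that are pairwise compatible and each compatible
with itself. -/
def RClique (tl hd : E → V) [DecidableEq E] (col : E → Col)
    (K : Set (RoutesT tl hd)) : Prop :=
  ∀ r ∈ K, ∀ r' ∈ K, RCompat tl hd col r r'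

/-- Netflow of a real flow at a vertex. -/
def netflowR (tl hd : E → V) [Fintype E] [DecidableEq V] (f : E → ℝ) (v : V) : ℝ :=
  (∑ e ∈ Finset.univ.filter (fun e => tl e = v), f e) -
  (∑ e ∈ Finset.univ.filter (fun e => hd e = v), f e)

/-- Netflow of a natural-number flow at a vertex, as an integer. -/
def netflowN (tl hd : E → V) [Fintype E] [DecidableEq V] (f : E → ℕ) (v : V) : ℤ :=
  (∑ e ∈ Finset.univ.filter (fun e => tl e = v), (f e : ℤ)) -
  (∑ e ∈ Finset.univ.filter (fun e => hd e = v), (f e : ℤ))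

/-- A cyclic integer flow: every minimal directed cycle has exactly one edge with
flow 0, and the netflow is 1 at every internal vertex except at the tails of
these zero edges, where it is 0. -/
def IsCyclicIntFlow (tl hd : E → V) [Fintype E] [DecidableEq V] [DecidableEq E]
    (f : E → ℕ) : Prop :=
  (∀ C : Finset E, IsCycleSet tl hd C → ∃! e : E, e ∈ C ∧ f e = 0) ∧
  (∀ v : V, IsInternal tl hd v →
    ((∃ C : Finset E, IsCycleSet tl hd C ∧ ∃ e ∈ C, f e = 0 ∧ tl e = v) →
      netflowN tl hd f v = 0) ∧
    ((¬ ∃ C : Finset E, IsCycleSet tl hd C ∧ ∃ e ∈ C, f e = 0 ∧ tl e = v) →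
      netflowN tl hd f v = 1))

/-- A cyclic volume integer flow: a cyclic integer flow with netflow 0 at every
source. -/
def IsCyclicVolIntFlow (tl hd : E → V) [Fintype E] [DecidableEq V] [DecidableEq E]
    (f : E → ℕ) : Prop :=
  IsCyclicIntFlow tl hd f ∧ ∀ v : V, IsSource tl hd v → netflowN tl hd f v = 0

/-- Vertices of the graph `H_{c,p}` of `c` nested `p`-cycles:
`(a,b)` with `0 ≤ a ≤ c+1` and `b ∈ {1,…,p}` (here 0-indexed). -/
abbrev HVtx (c p : ℕ) : Type := Fin (c + 2) × Fin p

/-- Edges of `H_{c,p}` : vertical edges `(a,b) → (a+1,b)` for `0 ≤ a ≤ c`,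
and row-cycle edges `(a,b) → (a, b+1 mod p)` for `1 ≤ a ≤ c`. -/
abbrev HEdg (c p : ℕ) : Type := (Fin (c + 1) × Fin p) ⊕ (Fin c × Fin p)

/-- Successor mod `p`. -/
def finNext {p : ℕ} (b : Fin p) : Fin p :=
  ⟨(b.1 + 1) % p, Nat.mod_lt _ (Nat.lt_of_le_of_lt (Nat.zero_le _) b.isLt)⟩

def Htl (c p : ℕ) : HEdg c p → HVtx c p
  | Sum.inl (a, b) => (Fin.castSucc a, b)
  | Sum.inr (a, b) => (Fin.castSucc (Fin.succ a), b)

def Hhd (c p : ℕ) : HEdg c p → HVtx c p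
  | Sum.inl (a, b) => (Fin.succ a, b)
  | Sum.inr (a, b) => (Fin.castSucc (Fin.succ a), finNext b)

/-- The cyclic ample framing of `H_{c,p}` : row-cycle edges are red, all the
remaining edges are blue. -/
def Hcol (c p : ℕ) : HEdg c p → Col
  | Sum.inl _ => Col.blue
  | Sum.inr _ => Col.red

lemma nat_card_sigma {ι : Type} [Fintype ι] (f : ι → Type) [∀ i, Finite (f i)] :
    Nat.card ((i : ι) × f i) = ∑ i, Nat.card (f i) := by
  letI : ∀ i, Fintype (f i) := fun i => Fintype.ofFinite _
  classical
  rw [Nat.card_eq_fintype_card, Fintype.card_sigma]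
  simp [Nat.card_eq_fintype_card]

instance compFinite (k n : ℕ) : Finite {w : Fin k → ℕ // ∑ b, w b = n} := by
  refine Finite.of_injective
    (fun w => (fun b => (⟨w.1 b, by
      have := Finset.single_le_sum (f := w.1) (fun _ _ => Nat.zero_le _) (Finset.mem_univ b)
      omega⟩ : Fin (n+1)) : Fin k → Fin (n+1))) ?_
  intro w w' h
  ext b
  exact congrArg Fin.val (congrFun h b)

lemma card_comp (k n : ℕ) :
    Nat.card {w : Fin (k+1) → ℕ // ∑ b, w b = n} = (n + k).choose k := by
  induction k generalizing n with
  | zero =>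
    have e : {w : Fin 1 → ℕ // ∑ b, w b = n} ≃ Unit :=
      { toFun := fun _ => ()
        invFun := fun _ => ⟨fun _ => n, by simp⟩
        left_inv := by
          rintro ⟨w, hw⟩
          ext b
          simp at hw
          fin_cases b
          simpa using hw.symm
        right_inv := fun _ => rfl }
    rw [Nat.card_congr e]
    simp
  | succ k ih =>
    have e : {w : Fin (k+2) → ℕ // ∑ b, w b = n} ≃
        Σ i : Fin (n+1), {v : Fin (k+1) → ℕ // ∑ b, v b = n - i.1} :=
      { toFun := fun w => ⟨⟨w.1 0, by
          have h0 := Finset.single_le_sum (f := w.1) (fun _ _ => Nat.zero_le _) (Finset.mem_univ 0)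
          have := w.2; omega⟩, ⟨Fin.tail w.1, by
          have := w.2
          rw [Fin.sum_univ_succ] at this
          simp only [Fin.tail]
          omega⟩⟩
        invFun := fun iv => ⟨Fin.cons iv.1.1 iv.2.1, by
          rw [Fin.sum_univ_succ]
          simp only [Fin.cons_zero, Fin.cons_succ]
          have := iv.2.2
          have h2 := iv.1.2
          omega⟩
        left_inv := by
          rintro ⟨w, hw⟩
          ext b
          simp [Fin.cons_self_tail]
        right_inv := by
          rintro ⟨⟨i, hi⟩, ⟨v, hv⟩⟩
          simp [Fin.tail_cons]
          rfl }
    rw [Nat.card_congr e, nat_card_sigma]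
    simp only [ih]
    rw [Fin.sum_univ_eq_sum_range (fun i => (n - i + k).choose k)]
    have hre := Finset.sum_range_reflect (fun j => (j + k).choose k) (n + 1)
    simp only [Nat.add_sub_cancel] at hre
    calc ∑ i ∈ Finset.range (n + 1), (n - i + k).choose k
        = ∑ i ∈ Finset.range (n + 1), (i + k).choose k := hre
      _ = (n + k + 1).choose (k + 1) := Nat.sum_range_add_choose n k
      _ = (n + (k + 1)).choose (k + 1) := by ring_nf

open Fin.NatCast Fin.CommRing

section Row

variable {p : ℕ} [NeZero p]

/-- partial sum of `d` around the cycle starting after `z`, of length `k`. -/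
def psum (d : Fin p → ℤ) (z : Fin p) (k : ℕ) : ℤ :=
  ∑ j ∈ Finset.range k, d (z + 1 + (j : Fin p))

lemma psum_zero (d : Fin p → ℤ) (z : Fin p) : psum d z 0 = 0 := by simp [psum]

lemma psum_succ (d : Fin p → ℤ) (z : Fin p) (k : ℕ) :
    psum d z (k + 1) = psum d z k + d (z + 1 + (k : Fin p)) :=
  Finset.sum_range_succ _ _

lemma psum_add (d : Fin p → ℤ) (z : Fin p) (k m : ℕ) :
    psum d z (k + m) = psum d z k + psum d (z + (k : Fin p)) m := by
  induction m with
  | zero => simp [psum_zero]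
  | succ m ih =>
    rw [← Nat.add_assoc, psum_succ, ih, psum_succ, add_assoc]
    congr 2
    push_cast
    ring

lemma psum_univ (d : Fin p → ℤ) (z : Fin p) : psum d z p = ∑ j, d j := by
  unfold psum
  rw [← Fin.sum_univ_eq_sum_range (fun j => d (z + 1 + (j : Fin p))) p]
  simp only [Fin.cast_val_eq_self]
  exact Equiv.sum_comp (Equiv.addLeft (z + 1)) d

/-- A good starting point for the cycle lemma. -/
def GoodZ (d : Fin p → ℤ) (z : Fin p) : Prop :=
  ∀ k : ℕ, 1 ≤ k → k < p → 1 ≤ psum d z k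

lemma exists_goodZ (hp : 2 ≤ p) (d : Fin p → ℤ) (hd1 : ∑ j, d j = 1) :
    ∃ z, GoodZ d z := by
  classical
  set g : Fin p → ℤ := fun i => psum d (-1) (i.1 + 1) with hg
  have gpsum : ∀ (i : Fin p) (m : ℕ), psum d i m = psum d (-1) (i.1 + 1 + m) - g i := by
    intro i m
    have h := psum_add d (-1) (i.1 + 1) m
    have hcast : ((i.1 + 1 : ℕ) : Fin p) = i + 1 := by
      push_cast
      rfl
    rw [hcast] at h
    have : (-1 : Fin p) + (i + 1) = i := by ring
    rw [this] at h
    rw [h, hg]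
    ring
  have pwrap : ∀ r : ℕ, psum d (-1) (p + r) = 1 + psum d (-1) r := by
    intro r
    have h := psum_add d (-1) p r
    rw [psum_univ, hd1, Fin.natCast_self, add_zero] at h
    exact h
  obtain ⟨m, -, hm⟩ := Finset.exists_min_image Finset.univ g ⟨⟨0, by omega⟩, Finset.mem_univ _⟩
  have hm' : ∀ y, g m ≤ g y := fun y => hm y (Finset.mem_univ y)
  set M : Finset (Fin p) := Finset.univ.filter (fun i => g i = g m) with hM
  have hMne : M.Nonempty := ⟨m, by simp [hM]⟩
  set z : Fin p := M.max' hMne with hz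
  have hzM : z ∈ M := M.max'_mem hMne
  have hgz : g z = g m := (Finset.mem_filter.mp hzM).2
  have hstrict : ∀ y : Fin p, z < y → g z + 1 ≤ g y := by
    intro y hy
    have hyM : y ∉ M := fun h => absurd (M.le_max' y h) (not_le.mpr hy)
    have h1 : g y ≠ g m := fun h => hyM (by simp [hM, h])
    have h2 := lt_of_le_of_ne (hm' y) (Ne.symm h1)
    rw [hgz]
    exact Int.add_one_le_iff.mpr h2
  refine ⟨z, ?_⟩
  intro k hk1 hkp
  have hzlt := z.isLt
  rcases le_or_gt (z.1 + 1 + k) p with hle | hgt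
  · -- no wraparound
    have hyp : z.1 + k < p := by omega
    have h1 : psum d z k = g ⟨z.1 + k, hyp⟩ - g z := by
      rw [gpsum z k]
      have : z.1 + 1 + k = (z.1 + k) + 1 := by omega
      rw [this]
    have hzy : z < (⟨z.1 + k, hyp⟩ : Fin p) := by
      rw [Fin.lt_def]
      show z.1 < z.1 + k
      omega
    have h2 := hstrict _ hzy
    linarith
  · -- wraparound
    have hr1 : 1 ≤ z.1 + 1 + k - p := by omega
    have hrp : z.1 + 1 + k - p - 1 < p := by omega
    have h1 : psum d z k = 1 + g ⟨z.1 + 1 + k - p - 1, hrp⟩ - g z := by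
      rw [gpsum z k]
      have he : z.1 + 1 + k = p + (z.1 + 1 + k - p) := by omega
      conv_lhs => rw [he, pwrap]
      have he3 : psum d (-1) (z.1 + 1 + k - p) = g ⟨z.1 + 1 + k - p - 1, hrp⟩ := by
        simp only [hg]
        congr 1
        omega
      rw [he3]
    have h2 := hm' ⟨z.1 + 1 + k - p - 1, hrp⟩
    linarith [hgz]

lemma goodZ_unique (hp : 2 ≤ p) (d : Fin p → ℤ) (hd1 : ∑ j, d j = 1)
    {z z' : Fin p} (h : GoodZ d z) (h' : GoodZ d z') : z = z' := by
  by_contra hne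
  have hsub : z' - z ≠ 0 := sub_ne_zero.mpr (Ne.symm hne)
  have hk0 : (z' - z).val ≠ 0 := by
    intro hh
    exact hsub (Fin.ext hh)
  set k : ℕ := (z' - z).val with hk
  have hkp : k < p := (z' - z).isLt
  have hsplit := psum_add d z k (p - k)
  have hkk : k + (p - k) = p := by omega
  rw [hkk, psum_univ, hd1, Fin.cast_val_eq_self, add_sub_cancel] at hsplit
  have h2 := h k (by omega) hkp
  have h3 := h' (p - k) (by omega) (by omega)
  linarith


/-- The row condition for flows. -/
def RowCond {p : ℕ} [NeZero p] (u w s : Fin p → ℕ) : Prop :=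
  (∃! z, s z = 0) ∧
  ∀ b, (w b : ℤ) + s b - u b - s (b - 1) = if s b = 0 then 0 else 1

lemma val_one_of_two_le (hp : 2 ≤ p) : (1 : Fin p).val = 1 := by
  rw [Fin.val_one']
  exact Nat.mod_eq_of_lt (by omega)

lemma sub_one_val (hp : 2 ≤ p) (x : Fin p) (hx : x ≠ 0) : (x - 1).val = x.val - 1 := by
  have hx0 : x.val ≠ 0 := fun h => hx (Fin.ext h)
  have hxlt := x.isLt
  rw [Fin.sub_def]
  simp only [val_one_of_two_le hp]
  show (p - 1 + x.val) % p = x.val - 1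
  have h2 : p - 1 + x.val = p + (x.val - 1) := by omega
  rw [h2, Nat.add_mod_left, Nat.mod_eq_of_lt (by omega)]

lemma neg_one_val (hp : 2 ≤ p) : ((-1 : Fin p)).val = p - 1 := by
  have h : ((p - 1 : ℕ) : Fin p) = (-1 : Fin p) := by
    have h1 : ((p - 1 : ℕ) : Fin p) = (p : Fin p) - 1 := by
      push_cast [Nat.cast_sub (by omega : 1 ≤ p)]
      ring
    rw [h1, Fin.natCast_self]
    ring
  rw [← h, Fin.val_natCast, Nat.mod_eq_of_lt (by omega)]

lemma rowcond_sum (hp : 2 ≤ p) {u w s : Fin p → ℕ} (h : RowCond u w s) :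
    ∑ b, w b = (∑ b, u b) + (p - 1) := by
  obtain ⟨⟨z, hz0, hzu⟩, heq⟩ := h
  have hsum : ∑ b, ((w b : ℤ) + s b - u b - s (b - 1))
      = ∑ b, (if s b = 0 then (0 : ℤ) else 1) :=
    Finset.sum_congr rfl fun b _ => heq b
  have hsb : ∑ b, ((s (b - 1) : ℕ) : ℤ) = ∑ b, ((s b : ℕ) : ℤ) :=
    Equiv.sum_comp (Equiv.subRight (1 : Fin p)) (fun b => ((s b : ℕ) : ℤ))
  have hlhs : ∑ b, ((w b : ℤ) + s b - u b - s (b - 1))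
      = (∑ b, (w b : ℤ)) - ∑ b, (u b : ℤ) := by
    rw [Finset.sum_sub_distrib, Finset.sum_sub_distrib, Finset.sum_add_distrib, hsb]
    ring
  have hrhs : ∑ b, (if s b = 0 then (0 : ℤ) else 1) = (p : ℤ) - 1 := by
    have h1 : ∀ b, (if s b = 0 then (0 : ℤ) else 1) = 1 - (if b = z then 1 else 0) := by
      intro b
      by_cases hb : b = z
      · subst hb
        rw [if_pos rfl, if_pos hz0]
        ring
      · rw [if_neg hb, if_neg]
        · ring
        · intro hb0
          exact hb (hzu b hb0)
    rw [Finset.sum_congr rfl fun b _ => h1 b, Finset.sum_sub_distrib,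
      Finset.sum_const, Finset.card_univ, Fintype.card_fin, Finset.sum_ite_eq' Finset.univ z]
    simp
  rw [hlhs, hrhs] at hsum
  have e1 : ((∑ b, w b : ℕ) : ℤ) = ∑ b, ((w b : ℕ) : ℤ) := by push_cast; rfl
  have e2 : ((∑ b, u b : ℕ) : ℤ) = ∑ b, ((u b : ℕ) : ℤ) := by push_cast; rfl
  omega

theorem row_exu (hp : 2 ≤ p) (u w : Fin p → ℕ)
    (hsum : ∑ b, w b = (∑ b, u b) + (p - 1)) :
    ∃! s : Fin p → ℕ, RowCond u w s := by
  classical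
  set d : Fin p → ℤ := fun b => (u b : ℤ) + 1 - w b with hd
  have hd1 : ∑ j, d j = 1 := by
    have h1 : ∑ j, d j = (∑ b, (u b : ℤ)) + p - ∑ b, (w b : ℤ) := by
      simp only [hd]
      rw [Finset.sum_sub_distrib, Finset.sum_add_distrib, Finset.sum_const,
        Finset.card_univ, Fintype.card_fin]
      push_cast
      ring
    have e1 : ((∑ b, w b : ℕ) : ℤ) = ∑ b, ((w b : ℕ) : ℤ) := by push_cast; rfl
    have e2 : ((∑ b, u b : ℕ) : ℤ) = ∑ b, ((u b : ℕ) : ℤ) := by push_cast; rfl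
    omega
  obtain ⟨z, hgood⟩ := exists_goodZ hp d hd1
  -- the canonical solution
  set s : Fin p → ℕ := fun b => (psum d z ((b - z).val)).toNat with hs
  have hzz : s z = 0 := by
    simp only [hs, sub_self, Fin.val_zero, psum_zero, Int.toNat_zero]
  have hksub : ∀ b : Fin p, b ≠ z → 1 ≤ (b - z).val ∧ (b - z).val < p := by
    intro b hb
    refine ⟨?_, (b - z).isLt⟩
    have h0 : b - z ≠ 0 := sub_ne_zero.mpr hb
    have : (b - z).val ≠ 0 := fun h => h0 (Fin.ext h)
    omega
  have hpos : ∀ b : Fin p, b ≠ z → 1 ≤ psum d z ((b - z).val) := by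
    intro b hb
    exact hgood _ (hksub b hb).1 (hksub b hb).2
  have hscast : ∀ b, (s b : ℤ) = psum d z ((b - z).val) := by
    intro b
    by_cases hb : b = z
    · subst hb
      simp only [sub_self, Fin.val_zero, psum_zero, hzz]
      rfl
    · exact Int.toNat_of_nonneg (by linarith [hpos b hb])
  have hsb0 : ∀ b, s b = 0 ↔ b = z := by
    intro b
    constructor
    · intro h
      by_contra hb
      have h1 := hpos b hb
      have h2 := hscast b
      rw [h] at h2
      simp at h2
      omega
    · intro h
      subst h
      exact hzz
  have hpred : ∀ b : Fin p, b ≠ z → (s (b - 1) : ℤ) = psum d z ((b - z).val - 1) := by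
    intro b hb
    have h1 : b - 1 - z = (b - z) - 1 := by ring
    have h2 : (b - 1 - z).val = (b - z).val - 1 := by
      rw [h1, sub_one_val hp _ (sub_ne_zero.mpr hb)]
    rw [hscast (b - 1), h2]
  have hdiff : ∀ b : Fin p, b ≠ z → (s b : ℤ) - s (b - 1) = d b := by
    intro b hb
    have hk1 := (hksub b hb).1
    have heq : (b - z).val = ((b - z).val - 1) + 1 := by omega
    have hcast : (((b - z).val - 1 : ℕ) : Fin p) = (b - z) - 1 := by
      push_cast [Nat.cast_sub hk1]
      rfl
    have hb' : z + 1 + (((b - z).val - 1 : ℕ) : Fin p) = b := by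
      rw [hcast]
      ring
    have hps := psum_succ d z ((b - z).val - 1)
    rw [← heq, hb'] at hps
    rw [hscast b, hpred b hb, hps]
    ring
  have hmain : RowCond u w s := by
    constructor
    · exact ⟨z, hzz, fun b hb => (hsb0 b).mp hb⟩
    · intro b
      by_cases hb : b = z
      · have hsbz : s b = 0 := (hsb0 b).mpr hb
        rw [if_pos hsbz]
        have h1 : (s (b - 1) : ℤ) = psum d z (p - 1) := by
          rw [hscast (b - 1)]
          congr 1
          have h0 : b - 1 - z = -1 := by rw [hb]; ring
          rw [h0, neg_one_val hp]
        have h5 : (((p - 1 : ℕ)) : Fin p) = (-1 : Fin p) := by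
          push_cast [Nat.cast_sub (show 1 ≤ p by omega)]
          rw [Fin.natCast_self]
          ring
        have h6 : z + 1 + (((p - 1 : ℕ)) : Fin p) = z := by rw [h5]; ring
        have h3 := psum_succ d z (p - 1)
        rw [show (p - 1) + 1 = p by omega, psum_univ, hd1, h6] at h3
        have hdz : d z = (u z : ℤ) + 1 - w z := rfl
        rw [hsbz, h1, hb]
        push_cast
        linarith
      · rw [if_neg (fun h => hb ((hsb0 b).mp h))]
        have h1 := hdiff b hb
        simp only [hd] at h1
        linarith
  refine ⟨s, hmain, ?_⟩
  -- uniqueness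
  intro s' hs'
  obtain ⟨⟨z', hz'0, hz'u⟩, heq'⟩ := hs'
  have hne0 : ∀ b, b ≠ z' → s' b ≠ 0 := fun b hb h => hb (hz'u b h)
  have step : ∀ b, b ≠ z' → (s' b : ℤ) = s' (b - 1) + d b := by
    intro b hb
    have h1 := heq' b
    rw [if_neg (hne0 b hb)] at h1
    simp only [hd]
    linarith
  have ind : ∀ k : ℕ, k < p → (s' (z' + (k : Fin p)) : ℤ) = psum d z' k := by
    intro k
    induction k with
    | zero => intro _; simp [hz'0, psum_zero]
    | succ k ih =>
      intro hk
      have hkp : k < p := by omega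
      have hcast1 : ((k + 1 : ℕ) : Fin p) = (k : Fin p) + 1 := by push_cast; ring
      have hval : ((k + 1 : ℕ) : Fin p).val = k + 1 := by
        rw [Fin.val_natCast, Nat.mod_eq_of_lt hk]
      have hb : z' + ((k + 1 : ℕ) : Fin p) ≠ z' := by
        intro h
        have : ((k + 1 : ℕ) : Fin p) = 0 := by
          have := add_left_cancel (a := z') (b := ((k + 1 : ℕ) : Fin p)) (c := 0)
          apply this
          rw [add_zero, h]
        rw [Fin.ext_iff, hval] at this
        simp at this
      have h1 := step _ hb
      have h2 : z' + ((k + 1 : ℕ) : Fin p) - 1 = z' + (k : Fin p) := by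
        rw [hcast1]; ring
      have h3 : z' + 1 + (k : Fin p) = z' + ((k + 1 : ℕ) : Fin p) := by
        rw [hcast1]; ring
      rw [h2, ih hkp] at h1
      rw [psum_succ, h3]
      linarith
  have good' : GoodZ d z' := by
    intro k hk1 hkp
    have hval : ((k : ℕ) : Fin p).val = k := by
      rw [Fin.val_natCast, Nat.mod_eq_of_lt hkp]
    have hb : z' + (k : Fin p) ≠ z' := by
      intro h
      have : ((k : ℕ) : Fin p) = 0 := by
        have := add_left_cancel (a := z') (b := ((k : ℕ) : Fin p)) (c := 0)
        apply this
        rw [add_zero, h]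
      rw [Fin.ext_iff, hval] at this
      simp at this
      omega
    have h1 := hne0 _ hb
    have h2 := ind k hkp
    have h3 : 1 ≤ s' (z' + (k : Fin p)) := Nat.one_le_iff_ne_zero.mpr h1
    omega
  have hzz' : z' = z := goodZ_unique hp d hd1 good' hgood
  subst hzz'
  funext b
  have h1 : z' + (((b - z').val : ℕ) : Fin p) = b := by
    rw [Fin.cast_val_eq_self]
    ring
  have h2 := ind ((b - z').val) (b - z').isLt
  rw [h1] at h2
  have h3 := hscast b
  omega

end Row

section Graph

variable {c p : ℕ}

lemma finNext_eq [NeZero p] (hp : 2 ≤ p) (b : Fin p) : finNext b = b + 1 := by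
  apply Fin.ext
  show (b.1 + 1) % p = _
  rw [Fin.val_add, val_one_of_two_le hp]

lemma isSource_iff (x : Fin (c+2)) (b : Fin p) :
    IsSource (Htl c p) (Hhd c p) (x, b) ↔ x.val = 0 := by
  constructor
  · intro h
    by_contra hx
    have hlt := x.isLt
    have hvc : x.val - 1 < c + 1 := by omega
    apply h (Sum.inl (⟨x.val - 1, hvc⟩, b))
    show ((⟨x.val - 1, hvc⟩ : Fin (c+1)).succ, b) = (x, b)
    simp only [Prod.mk.injEq, Fin.ext_iff, Fin.val_succ, and_true]
    show x.val - 1 + 1 = x.val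
    omega
  · intro hx e he
    rcases e with ⟨a, b'⟩ | ⟨a, b'⟩
    · have h1 : (Fin.succ a).val = x.val := congrArg (fun v : HVtx c p => v.1.val) he
      rw [Fin.val_succ] at h1
      omega
    · have h1 : (Fin.castSucc (Fin.succ a)).val = x.val :=
        congrArg (fun v : HVtx c p => v.1.val) he
      rw [Fin.coe_castSucc, Fin.val_succ] at h1
      omega

lemma isSink_iff (x : Fin (c+2)) (b : Fin p) :
    IsSink (Htl c p) (Hhd c p) (x, b) ↔ x.val = c + 1 := by
  constructor
  · intro h
    by_contra hx
    have hlt := x.isLt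
    have hx' : x.val < c + 1 := by omega
    apply h (Sum.inl (⟨x.val, hx'⟩, b))
    show (Fin.castSucc ⟨x.val, hx'⟩, b) = (x, b)
    simp only [Prod.mk.injEq, Fin.ext_iff, Fin.coe_castSucc, and_true]
  · intro hx e he
    rcases e with ⟨a, b'⟩ | ⟨a, b'⟩
    · have h1 : (Fin.castSucc a).val = x.val := congrArg (fun v : HVtx c p => v.1.val) he
      rw [Fin.coe_castSucc] at h1
      have := a.isLt
      omega
    · have h1 : (Fin.castSucc (Fin.succ a)).val = x.val :=
        congrArg (fun v : HVtx c p => v.1.val) he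
      rw [Fin.coe_castSucc, Fin.val_succ] at h1
      have := a.isLt
      omega

lemma isInternal_iff (x : Fin (c+2)) (b : Fin p) :
    IsInternal (Htl c p) (Hhd c p) (x, b) ↔ 1 ≤ x.val ∧ x.val ≤ c := by
  have hx := x.isLt
  unfold IsInternal
  rw [isSource_iff, isSink_iff]
  omega

lemma internal_rep (x : Fin (c+2)) (h1 : 1 ≤ x.val) (h2 : x.val ≤ c) :
    ∃ a : Fin c, x = Fin.castSucc (Fin.succ a) := by
  refine ⟨⟨x.val - 1, by omega⟩, ?_⟩
  apply Fin.ext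
  rw [Fin.coe_castSucc, Fin.val_succ]
  show x.val = x.val - 1 + 1
  omega

lemma isInternal_mk (a : Fin c) (b : Fin p) :
    IsInternal (Htl c p) (Hhd c p) (Fin.castSucc (Fin.succ a), b) := by
  rw [isInternal_iff]
  rw [Fin.coe_castSucc, Fin.val_succ]
  have := a.isLt
  omega

lemma netflow_internal [NeZero p] (hp : 2 ≤ p) (f : HEdg c p → ℕ) (a : Fin c) (b : Fin p) :
    netflowN (Htl c p) (Hhd c p) f (Fin.castSucc (Fin.succ a), b)
      = (f (Sum.inl (Fin.succ a, b)) : ℤ) + f (Sum.inr (a, b))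
        - f (Sum.inl (Fin.castSucc a, b)) - f (Sum.inr (a, b - 1)) := by
  have ht : Finset.univ.filter (fun e => Htl c p e = (Fin.castSucc (Fin.succ a), b))
      = {Sum.inl (Fin.succ a, b), Sum.inr (a, b)} := by
    ext e
    rw [Finset.mem_filter]
    rcases e with ⟨a', b'⟩ | ⟨a', b'⟩ <;>
      simp only [Finset.mem_filter, Finset.mem_univ, true_and, Finset.mem_insert,
        Finset.mem_singleton, Htl, Prod.mk.injEq, Sum.inl.injEq, Sum.inr.injEq,
        reduceCtorEq, or_false, false_or, Fin.ext_iff, Fin.coe_castSucc, Fin.val_succ] <;>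
      · constructor
        · rintro ⟨h1, h2⟩
          exact ⟨by omega, h2⟩
        · rintro ⟨h1, h2⟩
          exact ⟨by omega, h2⟩
  have hh : Finset.univ.filter (fun e => Hhd c p e = (Fin.castSucc (Fin.succ a), b))
      = {Sum.inl (Fin.castSucc a, b), Sum.inr (a, b - 1)} := by
    ext e
    rcases e with ⟨a', b'⟩ | ⟨a', b'⟩
    · rw [Finset.mem_filter]
      simp only [Finset.mem_filter, Finset.mem_univ, true_and, Finset.mem_insert,
        Finset.mem_singleton, Hhd, Prod.mk.injEq, Sum.inl.injEq, Sum.inr.injEq,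
        reduceCtorEq, or_false, Fin.ext_iff, Fin.coe_castSucc, Fin.val_succ]
      constructor
      · rintro ⟨h1, h2⟩
        exact ⟨by omega, h2⟩
      · rintro ⟨h1, h2⟩
        exact ⟨by omega, h2⟩
    · rw [Finset.mem_filter]
      simp only [Finset.mem_univ, true_and, Finset.mem_insert, Finset.mem_singleton,
        Hhd, Prod.mk.injEq, Sum.inl.injEq, Sum.inr.injEq, reduceCtorEq, false_or,
        finNext_eq hp]
      constructor
      · rintro ⟨h1, h2⟩
        have ha : a' = a := by
          rw [Fin.ext_iff] at h1 ⊢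
          rw [Fin.coe_castSucc, Fin.val_succ, Fin.coe_castSucc, Fin.val_succ] at h1
          omega
        refine ⟨ha, ?_⟩
        rw [← h2]
        ring
      · rintro ⟨h1, h2⟩
        subst h1
        refine ⟨rfl, ?_⟩
        rw [h2]
        ring
  unfold netflowN
  rw [ht, hh]
  rw [Finset.sum_insert (by simp), Finset.sum_insert (by simp),
    Finset.sum_singleton, Finset.sum_singleton]
  ring

lemma netflow_source (f : HEdg c p → ℕ) (b : Fin p) :
    netflowN (Htl c p) (Hhd c p) f ((0 : Fin (c+2)), b) = f (Sum.inl (0, b)) := by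
  have ht : Finset.univ.filter (fun e => Htl c p e = ((0 : Fin (c+2)), b))
      = {Sum.inl ((0 : Fin (c+1)), b)} := by
    ext e
    rw [Finset.mem_filter, Finset.mem_singleton]
    simp only [Finset.mem_univ, true_and]
    rcases e with ⟨a', b'⟩ | ⟨a', b'⟩
    · constructor
      · intro h1
        have h2 : (Fin.castSucc a').val = (0 : Fin (c+2)).val :=
          congrArg (fun v : HVtx c p => v.1.val) h1
        rw [Fin.coe_castSucc, Fin.val_zero] at h2
        have h3 : b' = b := congrArg (fun v : HVtx c p => v.2) h1
        have h4 : a' = 0 := Fin.ext (by rw [h2, Fin.val_zero])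
        rw [h3, h4]
      · intro h1
        have h2 : a' = 0 ∧ b' = b := by
          constructor
          · exact congrArg (fun e : HEdg c p => (Sum.elim (fun x => x.1) (fun x => (0 : Fin (c+1))) e)) h1
          · exact congrArg (fun e : HEdg c p => (Sum.elim (fun x => x.2) (fun _ => b') e)) h1
        show Htl c p (Sum.inl (a', b')) = _
        rw [h2.1, h2.2]
        show ((Fin.castSucc 0 : Fin (c+2)), b) = ((0 : Fin (c+2)), b)
        rw [Fin.castSucc_zero]
    · constructor
      · intro h1
        exfalso
        have h2 : (Fin.castSucc (Fin.succ a')).val = (0 : Fin (c+2)).val :=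
          congrArg (fun v : HVtx c p => v.1.val) h1
        rw [Fin.coe_castSucc, Fin.val_succ, Fin.val_zero] at h2
        omega
      · intro h1
        exact absurd h1 (by simp)
  have hh : Finset.univ.filter (fun e => Hhd c p e = ((0 : Fin (c+2)), b)) = ∅ := by
    ext e
    rw [Finset.mem_filter]
    simp only [Finset.mem_univ, true_and, Finset.notMem_empty, iff_false]
    rcases e with ⟨a', b'⟩ | ⟨a', b'⟩
    · intro h1
      have h2 : (Fin.succ a').val = (0 : Fin (c+2)).val :=
        congrArg (fun v : HVtx c p => v.1.val) h1
      rw [Fin.val_succ, Fin.val_zero] at h2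
      omega
    · intro h1
      have h2 : (Fin.castSucc (Fin.succ a')).val = (0 : Fin (c+2)).val :=
        congrArg (fun v : HVtx c p => v.1.val) h1
      rw [Fin.coe_castSucc, Fin.val_succ, Fin.val_zero] at h2
      omega
  unfold netflowN
  rw [ht, hh]
  simp

end Graph
section Cycles

variable {c p : ℕ}

/-- The edge set of the row cycle at row `a`. -/
def rowSet (c p : ℕ) (a : Fin c) : Finset (HEdg c p) :=
  Finset.univ.image fun b : Fin p => Sum.inr (a, b)

lemma mem_rowSet {a : Fin c} {e : HEdg c p} :
    e ∈ rowSet c p a ↔ ∃ b : Fin p, e = Sum.inr (a, b) := by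
  unfold rowSet
  rw [Finset.mem_image]
  constructor
  · rintro ⟨b, -, rfl⟩
    exact ⟨b, rfl⟩
  · rintro ⟨b, rfl⟩
    exact ⟨b, Finset.mem_univ b, rfl⟩

lemma rowSet_isCycleSet [NeZero p] (hp : 2 ≤ p) (a : Fin c) :
    IsCycleSet (Htl c p) (Hhd c p) (rowSet c p a) := by
  refine ⟨List.ofFn (fun i : Fin p => (Sum.inr (a, i) : HEdg c p)), ⟨⟨?_, ?_⟩, ?_, ?_⟩, ?_⟩
  · -- nonempty
    have : (List.ofFn (fun i : Fin p => (Sum.inr (a, i) : HEdg c p))).length = p := by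
      simp
    intro h
    rw [h] at this
    simp at this
    omega
  · -- chain'
    refine List.isChain_iff_getElem.mpr ?_
    intro i hi
    rw [List.length_ofFn] at hi
    rw [List.getElem_ofFn, List.getElem_ofFn]
    have h1 : i < p := by omega
    have h2 : i + 1 < p := by omega
    show Hhd c p (Sum.inr (a, ⟨i, h1⟩)) = Htl c p (Sum.inr (a, ⟨i + 1, h2⟩))
    show ((Fin.castSucc (Fin.succ a) : Fin (c+2)), finNext (⟨i, h1⟩ : Fin p))
      = ((Fin.castSucc (Fin.succ a) : Fin (c+2)), (⟨i + 1, h2⟩ : Fin p))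
    have h3 : finNext (⟨i, h1⟩ : Fin p) = ⟨i + 1, h2⟩ := by
      apply Fin.ext
      show (i + 1) % p = i + 1
      exact Nat.mod_eq_of_lt h2
    rw [h3]
  · -- closing
    intro e he fe hfe
    have hlen : (List.ofFn (fun i : Fin p => (Sum.inr (a, i) : HEdg c p))).length = p := by simp
    have hne : (List.ofFn (fun i : Fin p => (Sum.inr (a, i) : HEdg c p))) ≠ [] := by
      intro h
      rw [h] at hlen
      simp at hlen
      omega
    rw [List.getLast?_eq_getLast_of_ne_nil hne, Option.mem_some_iff] at he
    rw [List.head?_eq_head hne, Option.mem_some_iff] at hfe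
    subst he
    subst hfe
    rw [List.getLast_eq_getElem, List.head_eq_getElem_zero hne]
    simp only [List.getElem_ofFn, List.length_ofFn]
    show ((Fin.castSucc (Fin.succ a) : Fin (c+2)), finNext _) = ((Fin.castSucc (Fin.succ a) : Fin (c+2)), _)
    congr 1
    apply Fin.ext
    show (p - 1 + 1) % p = 0
    have hp1 : p - 1 + 1 = p := by omega
    rw [hp1, Nat.mod_self]
  · -- nodup heads
    rw [List.map_ofFn, List.nodup_ofFn]
    intro i j hij
    simp only [Function.comp_apply] at hij
    have h2 : finNext i = finNext j :=
      congrArg (fun v : HVtx c p => v.2) hij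
    rw [finNext_eq hp, finNext_eq hp] at h2
    exact add_right_cancel h2
  · -- toFinset
    ext e
    rw [List.mem_toFinset, mem_rowSet]
    rw [List.mem_ofFn]
    constructor
    · rintro ⟨b, rfl⟩
      exact ⟨b, rfl⟩
    · rintro ⟨b, rfl⟩
      exact ⟨b, rfl⟩

end Cycles
section Forward

variable {c p : ℕ}

lemma min_cycle_row [NeZero p] (hp : 2 ≤ p) {w : List (HEdg c p)}
    (hw : IsMinCycle (Htl c p) (Hhd c p) w) :
    ∃ a : Fin c, w.toFinset = rowSet c p a := by
  obtain ⟨⟨hne, hch⟩, hclose, hnodup⟩ := hw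
  have hn0 : 0 < w.length := List.length_pos_iff.mpr hne
  have hget : ∀ i, ∀ (_h : i + 1 < w.length),
      Hhd c p (w[i]'(by omega)) = Htl c p (w[i+1]'(by omega)) := by
    intro i hi
    have h1 := List.isChain_iff_getElem.mp hch i (by omega)
    simpa using h1
  have hlast : Hhd c p (w[w.length - 1]'(by omega)) = Htl c p (w[0]'hn0) := by
    have h1 := hclose (w.getLast hne) (List.getLast?_eq_getLast_of_ne_nil hne)
      (w.head hne) (List.head?_eq_head hne)
    rwa [List.getLast_eq_getElem, List.head_eq_getElem_zero hne] at h1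
  -- tail row and head row as naturals
  have hstep : ∀ e : HEdg c p, ((Htl c p e).1.val ≤ (Hhd c p e).1.val) := by
    rintro (⟨a, b⟩ | ⟨a, b⟩)
    · show (Fin.castSucc a).val ≤ (Fin.succ a).val
      rw [Fin.coe_castSucc, Fin.val_succ]
      omega
    · exact le_refl _
  have mono : ∀ j, ∀ (hj : j < w.length), ∀ i, ∀ (_hij : i ≤ j),
      (Htl c p (w[i]'(by omega))).1.val ≤ (Htl c p (w[j]'hj)).1.val := by
    intro j
    induction j with
    | zero =>
      intro hj i hij
      have : i = 0 := by omega
      subst this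
      exact le_refl _
    | succ j ih =>
      intro hj i hij
      rcases Nat.lt_or_ge i (j + 1) with hlt | hge
      · have h1 := ih (by omega) i (by omega)
        have h2 := hget j (by omega)
        have h3 : (Htl c p (w[j+1]'hj)).1.val = (Hhd c p (w[j]'(by omega))).1.val := by
          rw [h2]
        have h4 := hstep (w[j]'(by omega : j < w.length))
        omega
      · have : i = j + 1 := by omega
        subst this
        exact le_refl _
  have all_inr : ∀ i, ∀ (hi : i < w.length), ∃ ab : Fin c × Fin p,
      w[i]'hi = Sum.inr ab := by
    intro i hi
    rcases he : w[i]'hi with ⟨a, b⟩ | ab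
    swap
    · exact ⟨ab, rfl⟩
    exfalso
    have hinc : (Htl c p (w[i]'hi)).1.val + 1 = (Hhd c p (w[i]'hi)).1.val := by
      rw [he]
      show (Fin.castSucc a).val + 1 = (Fin.succ a).val
      rw [Fin.coe_castSucc, Fin.val_succ]
    have h0i := mono i hi 0 (by omega)
    rcases Nat.lt_or_ge (i + 1) w.length with hlt | hge
    · have h1 : (Htl c p (w[i+1]'hlt)).1.val = (Hhd c p (w[i]'hi)).1.val := by
        rw [hget i hlt]
      have h2 := mono (w.length - 1) (by omega) (i + 1) (by omega)
      have h3 := hstep (w[w.length - 1]'(by omega))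
      have h4 : (Hhd c p (w[w.length - 1]'(by omega))).1.val
          = (Htl c p (w[0]'hn0)).1.val := by rw [hlast]
      omega
    · have hieq : i = w.length - 1 := by omega
      subst hieq
      have h4 : (Hhd c p (w[w.length - 1]'(by omega))).1.val
          = (Htl c p (w[0]'hn0)).1.val := by rw [hlast]
      omega
  obtain ⟨⟨a₀, b₀⟩, h₀⟩ := all_inr 0 hn0
  have cl : ∀ i, ∀ (hi : i < w.length), w[i]'hi = Sum.inr (a₀, b₀ + (i : Fin p)) := by
    intro i
    induction i with
    | zero =>
      intro hi
      rw [h₀]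
      norm_num
    | succ i ih =>
      intro hi
      have e1 := ih (by omega)
      obtain ⟨⟨a₁, b₁⟩, h₁⟩ := all_inr (i + 1) hi
      have h2 := hget i (by omega)
      rw [e1, h₁] at h2
      have ha : a₁ = a₀ := by
        have h3 : (Fin.castSucc (Fin.succ a₀)).val = (Fin.castSucc (Fin.succ a₁)).val :=
          congrArg (fun v : HVtx c p => v.1.val) h2
        rw [Fin.coe_castSucc, Fin.val_succ, Fin.coe_castSucc, Fin.val_succ] at h3
        exact Fin.ext (by omega)
      have hb : b₁ = b₀ + ((i + 1 : ℕ) : Fin p) := by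
        have h3 : finNext (b₀ + (i : Fin p)) = b₁ :=
          congrArg (fun v : HVtx c p => v.2) h2
        rw [finNext_eq hp] at h3
        rw [← h3]
        push_cast
        ring
      rw [h₁, ha, hb]
  -- the length is exactly p
  have hdvd : p ∣ w.length := by
    have h1 := hlast
    rw [cl (w.length - 1) (by omega), cl 0 hn0] at h1
    have h2 : finNext (b₀ + ((w.length - 1 : ℕ) : Fin p)) = b₀ + ((0 : ℕ) : Fin p) :=
      congrArg (fun v : HVtx c p => v.2) h1
    rw [Nat.cast_zero, add_zero, finNext_eq hp] at h2
    have h3 : ((w.length : ℕ) : Fin p) = 0 := by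
      have h4 : (((w.length - 1 : ℕ) : Fin p)) + 1 = 0 := by
        have h2' : b₀ + ((((w.length - 1 : ℕ) : Fin p)) + 1) = b₀ := by
          rw [← add_assoc]
          exact h2
        exact add_eq_left.mp h2'
      have h5 : ((w.length : ℕ) : Fin p) = (((w.length - 1 : ℕ) : Fin p)) + 1 := by
        have h6 : w.length = (w.length - 1) + 1 := by omega
        rw [h6]
        push_cast
        ring
      rw [h5, h4]
    rwa [Fin.natCast_eq_zero] at h3
  have hlep : w.length ≤ p := by
    have hmapnd := hnodup
    have hFinj : Function.Injective (fun i : Fin w.length => b₀ + (i.1 : Fin p) + 1) := by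
      intro i j hij
      have hi := i.isLt
      have hj := j.isLt
      have hij' : b₀ + (i.1 : Fin p) + 1 = b₀ + (j.1 : Fin p) + 1 := hij
      have h1 : (w.map (Hhd c p))[i.1]'(by simpa using hi)
          = (w.map (Hhd c p))[j.1]'(by simpa using hj) := by
        rw [List.getElem_map, List.getElem_map, cl i.1 hi, cl j.1 hj]
        show (Fin.castSucc (Fin.succ a₀), finNext (b₀ + (i.1 : Fin p)))
          = (Fin.castSucc (Fin.succ a₀), finNext (b₀ + (j.1 : Fin p)))
        rw [finNext_eq hp, finNext_eq hp, hij']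
      have h2 := (List.Nodup.getElem_inj_iff hmapnd).mp h1
      exact Fin.ext h2
    have := Fintype.card_le_of_injective _ hFinj
    simpa using this
  have hlenp : w.length = p := Nat.le_antisymm hlep (Nat.le_of_dvd hn0 hdvd)
  refine ⟨a₀, ?_⟩
  ext e
  rw [List.mem_toFinset, mem_rowSet, List.mem_iff_getElem]
  constructor
  · rintro ⟨i, hi, rfl⟩
    exact ⟨b₀ + (i : Fin p), cl i hi⟩
  · rintro ⟨b, rfl⟩
    have hi : (b - b₀).val < w.length := by
      rw [hlenp]
      exact (b - b₀).isLt
    refine ⟨(b - b₀).val, hi, ?_⟩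
    rw [cl _ hi, Fin.cast_val_eq_self]
    congr 2
    ring

end Forward
section Assemble

variable {c p : ℕ}

lemma isCycleSet_iff [NeZero p] (hp : 2 ≤ p) (C : Finset (HEdg c p)) :
    IsCycleSet (Htl c p) (Hhd c p) C ↔ ∃ a : Fin c, C = rowSet c p a := by
  constructor
  · rintro ⟨w, hw, rfl⟩
    exact min_cycle_row hp hw
  · rintro ⟨a, rfl⟩
    exact rowSet_isCycleSet hp a

/-- Explicit characterization of cyclic volume integer flows on `H_{c,p}`. -/
def FlowP (c p : ℕ) [NeZero p] (f : HEdg c p → ℕ) : Prop :=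
  (∀ a : Fin c, ∃! b : Fin p, f (Sum.inr (a, b)) = 0) ∧
  (∀ (a : Fin c) (b : Fin p),
    (f (Sum.inl (Fin.succ a, b)) : ℤ) + f (Sum.inr (a, b))
      - f (Sum.inl (Fin.castSucc a, b)) - f (Sum.inr (a, b - 1))
      = if f (Sum.inr (a, b)) = 0 then 0 else 1) ∧
  (∀ b : Fin p, f (Sum.inl (0, b)) = 0)

lemma zcond_iff [NeZero p] (hp : 2 ≤ p) (f : HEdg c p → ℕ) (a : Fin c) (b : Fin p) :
    (∃ C : Finset (HEdg c p), IsCycleSet (Htl c p) (Hhd c p) C ∧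
        ∃ e ∈ C, f e = 0 ∧ Htl c p e = (Fin.castSucc (Fin.succ a), b))
      ↔ f (Sum.inr (a, b)) = 0 := by
  constructor
  · rintro ⟨C, hC, e, heC, hfe, hte⟩
    rw [isCycleSet_iff hp] at hC
    obtain ⟨a', rfl⟩ := hC
    obtain ⟨b', rfl⟩ := mem_rowSet.mp heC
    have h1 : (Fin.castSucc (Fin.succ a')).val = (Fin.castSucc (Fin.succ a)).val :=
      congrArg (fun v : HVtx c p => v.1.val) hte
    rw [Fin.coe_castSucc, Fin.val_succ, Fin.coe_castSucc, Fin.val_succ] at h1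
    have h2 : b' = b := congrArg (fun v : HVtx c p => v.2) hte
    have h3 : a' = a := Fin.ext (by omega)
    rwa [h2, h3] at hfe
  · intro h
    exact ⟨rowSet c p a, rowSet_isCycleSet hp a, Sum.inr (a, b),
      mem_rowSet.mpr ⟨b, rfl⟩, h, rfl⟩

lemma flow_iff [NeZero p] (hp : 2 ≤ p) (f : HEdg c p → ℕ) :
    IsCyclicVolIntFlow (Htl c p) (Hhd c p) f ↔ FlowP c p f := by
  constructor
  · rintro ⟨⟨hcyc, hnet⟩, hsrc⟩
    refine ⟨?_, ?_, ?_⟩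
    · intro a
      obtain ⟨e, ⟨heC, hfe⟩, hu⟩ := hcyc (rowSet c p a) (rowSet_isCycleSet hp a)
      obtain ⟨b₀, rfl⟩ := mem_rowSet.mp heC
      refine ⟨b₀, hfe, ?_⟩
      intro b hb
      have := hu (Sum.inr (a, b)) ⟨mem_rowSet.mpr ⟨b, rfl⟩, hb⟩
      have h2 : (a, b) = (a, b₀) := Sum.inr.injEq _ _ ▸ (by
        injection this)
      exact congrArg Prod.snd h2
    · intro a b
      have hv := hnet (Fin.castSucc (Fin.succ a), b) (isInternal_mk a b)
      rw [← netflow_internal hp]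
      by_cases h0 : f (Sum.inr (a, b)) = 0
      · rw [if_pos h0]
        exact hv.1 ((zcond_iff hp f a b).mpr h0)
      · rw [if_neg h0]
        exact hv.2 (fun hz => h0 ((zcond_iff hp f a b).mp hz))
    · intro b
      have hs := hsrc ((0 : Fin (c+2)), b) ((isSource_iff _ _).mpr (Fin.val_zero _))
      rw [netflow_source] at hs
      exact_mod_cast hs
  · rintro ⟨h1, h2, h3⟩
    refine ⟨⟨?_, ?_⟩, ?_⟩
    · intro C hC
      rw [isCycleSet_iff hp] at hC
      obtain ⟨a, rfl⟩ := hC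
      obtain ⟨b₀, hb₀, hbu⟩ := h1 a
      refine ⟨Sum.inr (a, b₀), ⟨mem_rowSet.mpr ⟨b₀, rfl⟩, hb₀⟩, ?_⟩
      rintro e ⟨heC, hfe⟩
      obtain ⟨b, rfl⟩ := mem_rowSet.mp heC
      rw [hbu b hfe]
    · rintro ⟨x, b⟩ hint
      rw [isInternal_iff] at hint
      obtain ⟨a, rfl⟩ := internal_rep x hint.1 hint.2
      constructor
      · intro hz
        have h0 := (zcond_iff hp f a b).mp hz
        rw [netflow_internal hp, h2 a b, if_pos h0]
      · intro hz
        have h0 : f (Sum.inr (a, b)) ≠ 0 := fun h => hz ((zcond_iff hp f a b).mpr h)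
        rw [netflow_internal hp, h2 a b, if_neg h0]
    · rintro ⟨x, b⟩ hsrc'
      rw [isSource_iff] at hsrc'
      have hx : x = 0 := Fin.ext hsrc'
      subst hx
      rw [netflow_source, h3 b]
      rfl

lemma flowP_rowCond [NeZero p] (f : HEdg c p → ℕ) (hf : FlowP c p f) (a : Fin c) :
    RowCond (fun b => f (Sum.inl (Fin.castSucc a, b)))
      (fun b => f (Sum.inl (Fin.succ a, b))) (fun b => f (Sum.inr (a, b))) :=
  ⟨hf.1 a, fun b => hf.2.1 a b⟩

lemma flowP_vsum [NeZero p] (hp : 2 ≤ p) (f : HEdg c p → ℕ) (hf : FlowP c p f) :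
    ∀ x : Fin (c + 1), ∑ b, f (Sum.inl (x, b)) = x.val * (p - 1) := by
  intro x
  induction x using Fin.induction with
  | zero => simp [hf.2.2]
  | succ a ih =>
    have h1 := rowcond_sum hp (flowP_rowCond f hf a)
    rw [h1, ih]
    rw [Fin.coe_castSucc, Fin.val_succ]
    ring

end Assemble
section Final

variable {c p : ℕ}

/-- The data parametrizing flows: the vertical flow values on rows `1,…,c`. -/
abbrev Gtype (c p : ℕ) : Type :=
  ∀ a : Fin c, {w : Fin p → ℕ // ∑ b, w b = (a.val + 1) * (p - 1)}

/-- Vertical flow profile from the data. -/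
def VV (g : Gtype c p) (x : Fin (c + 1)) : Fin p → ℕ :=
  Fin.cases (fun _ => 0) (fun a => (g a).1) x

lemma VV_zero (g : Gtype c p) (b : Fin p) : VV g 0 b = 0 := by
  unfold VV
  rw [Fin.cases_zero]

lemma VV_succ (g : Gtype c p) (a : Fin c) (b : Fin p) :
    VV g (Fin.succ a) b = (g a).1 b := by
  unfold VV
  rw [Fin.cases_succ]

lemma VV_sum (g : Gtype c p) (x : Fin (c + 1)) :
    ∑ b, VV g x b = x.val * (p - 1) := by
  induction x using Fin.cases with
  | zero => simp [VV_zero]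
  | succ a =>
    simp only [VV_succ]
    rw [(g a).2, Fin.val_succ]

lemma VV_hrow (g : Gtype c p) (a : Fin c) :
    ∑ b, VV g (Fin.succ a) b = (∑ b, VV g (Fin.castSucc a) b) + (p - 1) := by
  rw [VV_sum, VV_sum, Fin.val_succ, Fin.coe_castSucc]
  ring

/-- Row flow values from the data, via the unique solution of the row condition. -/
noncomputable def ss [NeZero p] (hp : 2 ≤ p) (g : Gtype c p) (a : Fin c) : Fin p → ℕ :=
  Classical.choose (row_exu hp (fun b => VV g (Fin.castSucc a) b)
    (fun b => VV g (Fin.succ a) b) (VV_hrow g a))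

lemma ss_spec [NeZero p] (hp : 2 ≤ p) (g : Gtype c p) (a : Fin c) :
    RowCond (fun b => VV g (Fin.castSucc a) b) (fun b => VV g (Fin.succ a) b)
      (ss hp g a) ∧
    ∀ s', RowCond (fun b => VV g (Fin.castSucc a) b) (fun b => VV g (Fin.succ a) b) s'
      → s' = ss hp g a :=
  Classical.choose_spec (row_exu hp (fun b => VV g (Fin.castSucc a) b)
    (fun b => VV g (Fin.succ a) b) (VV_hrow g a))

/-- The flow built from the data. -/
noncomputable def bF [NeZero p] (hp : 2 ≤ p) (g : Gtype c p) : HEdg c p → ℕ :=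
  Sum.elim (fun xb => VV g xb.1 xb.2) (fun ab => ss hp g ab.1 ab.2)

lemma bF_flowP [NeZero p] (hp : 2 ≤ p) (g : Gtype c p) : FlowP c p (bF hp g) := by
  refine ⟨?_, ?_, ?_⟩
  · intro a
    exact (ss_spec hp g a).1.1
  · intro a b
    exact (ss_spec hp g a).1.2 b
  · intro b
    exact VV_zero g b

/-- The main equivalence. -/
noncomputable def flowEquiv [NeZero p] (hp : 2 ≤ p) :
    {f : HEdg c p → ℕ // FlowP c p f} ≃ Gtype c p where
  toFun f := fun a => ⟨fun b => f.1 (Sum.inl (Fin.succ a, b)), by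
    rw [flowP_vsum hp f.1 f.2 (Fin.succ a), Fin.val_succ]⟩
  invFun g := ⟨bF hp g, bF_flowP hp g⟩
  left_inv := by
    rintro ⟨f, hf⟩
    apply Subtype.ext
    show bF hp _ = f
    set g : Gtype c p := fun a => ⟨fun b => f (Sum.inl (Fin.succ a, b)), by
      rw [flowP_vsum hp f hf (Fin.succ a), Fin.val_succ]⟩ with hg
    have hVVf : ∀ (x : Fin (c + 1)) (b : Fin p), VV g x b = f (Sum.inl (x, b)) := by
      intro x b
      induction x using Fin.cases with
      | zero => rw [VV_zero, hf.2.2 b]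
      | succ a => rw [VV_succ]
    funext e
    rcases e with ⟨x, b⟩ | ⟨a, b⟩
    · exact hVVf x b
    · show ss hp g a b = f (Sum.inr (a, b))
      have hu : (fun b => VV g (Fin.castSucc a) b)
          = (fun b => f (Sum.inl (Fin.castSucc a, b))) := funext (hVVf _)
      have hw : (fun b => VV g (Fin.succ a) b)
          = (fun b => f (Sum.inl (Fin.succ a, b))) := funext (hVVf _)
      have hrc := flowP_rowCond f hf a
      rw [← hu, ← hw] at hrc
      have := (ss_spec hp g a).2 _ hrc
      rw [← this]
  right_inv := by
    intro g
    funext a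
    apply Subtype.ext
    funext b
    show bF hp g (Sum.inl (Fin.succ a, b)) = (g a).1 b
    exact VV_succ g a b

lemma arith (c q : ℕ) :
    (∏ a ∈ Finset.range c, ((a + 1) * q + q).choose q) * (q.factorial) ^ (c + 1)
      = ((c + 1) * q).factorial := by
  induction c with
  | zero => simp
  | succ c ih =>
    rw [Finset.prod_range_succ, pow_succ]
    have h1 : (∏ a ∈ Finset.range c, ((a + 1) * q + q).choose q) * ((c + 1) * q + q).choose q
        * (q.factorial ^ (c + 1) * q.factorial)
        = (((c + 1) * q + q).choose q * ((c + 1) * q).factorial * q.factorial) := by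
      rw [← ih]
      ring
    rw [h1, Nat.add_choose_mul_factorial_mul_factorial]
    congr 1
    ring

lemma key (c p : ℕ) (hp : 2 ≤ p) :
    {f : HEdg c p → ℕ | IsCyclicVolIntFlow (Htl c p) (Hhd c p) f}.ncard
      = Nat.factorial ((c + 1) * (p - 1)) / (Nat.factorial (p - 1)) ^ (c + 1) := by
  haveI : NeZero p := ⟨by omega⟩
  have hset : {f : HEdg c p → ℕ | IsCyclicVolIntFlow (Htl c p) (Hhd c p) f}
      = {f : HEdg c p → ℕ | FlowP c p f} := by
    ext f
    exact flow_iff hp f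
  rw [hset, ← Nat.card_coe_set_eq]
  have h1 : Nat.card {f : HEdg c p → ℕ | FlowP c p f} = Nat.card (Gtype c p) :=
    Nat.card_congr (flowEquiv hp)
  rw [h1]
  obtain ⟨q, rfl⟩ : ∃ q, p = q + 1 := ⟨p - 1, by omega⟩
  have hq : (q + 1) - 1 = q := by omega
  rw [Nat.card_pi]
  have h2 : ∀ a : Fin c, Nat.card {w : Fin (q + 1) → ℕ // ∑ b, w b = (a.val + 1) * ((q+1) - 1)}
      = ((a.val + 1) * q + q).choose q := by
    intro a
    rw [hq, card_comp]
  rw [Finset.prod_congr rfl (fun a _ => h2 a)]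
  rw [Fin.prod_univ_eq_prod_range (fun i => ((i + 1) * q + q).choose q) c, hq]
  symm
  apply Nat.div_eq_of_eq_mul_left
  · exact pow_pos (Nat.factorial_pos q) (c + 1)
  · rw [← arith c q]
end Final

/-- the number of cyclic volume integer flows of `H_{c,p}` is the
multinomial coefficient `((c+1)(p-1))! / ((p-1)!)^(c+1)`; in particular
`H_{1,p}` has `binom(2p-2, p-1)` of them and `H_{c,2}` has `(c+1)!` of them. -/
theorem statement10 (c p : ℕ) (hc : 1 ≤ c) (hp : 2 ≤ p) :
    {f : HEdg c p → ℕ | IsCyclicVolIntFlow (Htl c p) (Hhd c p) f}.ncard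
      = Nat.factorial ((c + 1) * (p - 1)) / (Nat.factorial (p - 1)) ^ (c + 1) ∧
    {f : HEdg 1 p → ℕ | IsCyclicVolIntFlow (Htl 1 p) (Hhd 1 p) f}.ncard
      = Nat.choose (2 * p - 2) (p - 1) ∧
    {f : HEdg c 2 → ℕ | IsCyclicVolIntFlow (Htl c 2) (Hhd c 2) f}.ncard
      = Nat.factorial (c + 1) := by
  refine ⟨key c p hp, ?_, ?_⟩
  · rw [key 1 p hp]
    have h1 : (1 + 1) * (p - 1) = 2 * p - 2 := by omega
    rw [h1, Nat.choose_eq_factorial_div_factorial (by omega : p - 1 ≤ 2 * p - 2)]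
    have h2 : 2 * p - 2 - (p - 1) = p - 1 := by omega
    rw [h2]
    congr 1
    rw [pow_two]
  · rw [key c 2 (le_refl 2)]
    norm_num

end PaperDKK
end

section
/- Fix n ≥ 1 and a string datum (c,d,C,D): integers 1 ≤ c ≤ d ≤ n together with disjoint sets C and D with C ∪ D = {c+1,…,d}. Call a subset S ⊆ {c,…,d} admissible if for every i with c < i ≤ d, the conditions i ∈ S and i−1 ∉ S imply i ∈ C, and for every i with c ≤ i < d, the conditions i ∈ S and i+1 ∉ S imply i+1 ∈ D. Let ι : ℝ^n → ℝ^{n+1} be the linear map with ι(e_i) = e_i − e_{i+1}. Then S ↦ ι(1_S) is a bijection from the set of admissible subsets of {c,…,d} onto the set of characteristic vectors of alternating matchings of the arc (c, d+1, C, D); consequently ι maps the polytope conv{1_S : S admissible} ⊆ ℝ^n (the Harder–Narasimhan polytope of the corresponding string module, an order polytope of a fence poset) onto the shard polytope SP(c, d+1, C, D) ⊆ ℝ^{n+1}. -/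
namespace PaperDKK

/-!  We work with vectors indexed by `ℕ`; `ℝ^n` (resp. `ℝ^{n+1}`) is identified
with the vectors supported on coordinates `1,…,n` (resp. `1,…,n+1`), with
standard basis vectors `e_1, e_2, …`. -/

/-- The indicator vector `1_S` of a finite set of coordinates. -/
def indS (S : Finset ℕ) : ℕ → ℝ := fun i => if i ∈ S then 1 else 0

/-- The linear map `ι` with `ι(e_i) = e_i − e_{i+1}` for all `i ≥ 1`. -/
def iotaMap (x : ℕ → ℝ) : ℕ → ℝ := fun j => x j - x (j - 1)

/-- An `(a,b,A,B)`-alternating matching, encoded as the list of its pairs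
`(a_1,b_1),…,(a_k,b_k)` with
`a ≤ a_1 < b_1 < a_2 < ⋯ < a_k < b_k ≤ b`, `a_i ∈ A ∪ {a}`, `b_i ∈ B ∪ {b}`. -/
def IsAltMatching (a b : ℕ) (A B : Finset ℕ) (m : List (ℕ × ℕ)) : Prop :=
  (∀ q ∈ m, q.1 ∈ insert a A ∧ q.2 ∈ insert b B ∧ q.1 < q.2) ∧
  List.Chain' (fun q r => q.2 < r.1) m ∧
  (∀ q ∈ m.head?, a ≤ q.1) ∧ (∀ q ∈ m.getLast?, q.2 ≤ b)

/-- The characteristic vector `Σ_i (e_{a_i} − e_{b_i})` of an alternating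
matching. -/
def chiVec (m : List (ℕ × ℕ)) : ℕ → ℝ :=
  fun i => ((m.map Prod.fst).count i : ℝ) - ((m.map Prod.snd).count i : ℝ)

/-- Admissible subsets `S ⊆ {c,…,d}` (the order ideals of the fence poset,
i.e. the dimension vectors of submodules of the string module). -/
def Admissible (c d : ℕ) (Cs Ds : Finset ℕ) (S : Finset ℕ) : Prop :=
  S ⊆ Finset.Icc c d ∧
  (∀ i : ℕ, c < i → i ≤ d → i ∈ S → i - 1 ∉ S → i ∈ Cs) ∧
  (∀ i : ℕ, c ≤ i → i < d → i ∈ S → i + 1 ∉ S → i + 1 ∈ Ds)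

lemma chiVec_cons (a b : ℕ) (m : List (ℕ × ℕ)) (i : ℕ) :
    chiVec ((a, b) :: m) i =
      ((if i = a then (1:ℝ) else 0) - (if i = b then 1 else 0)) + chiVec m i := by
  simp only [chiVec, List.map_cons, List.count_cons, beq_iff_eq]
  push_cast
  rcases eq_or_ne a i with h | h <;> rcases eq_or_ne b i with h' | h' <;>
    subst_vars <;> simp_all [eq_comm] <;> ring

lemma iota_ind_Icc (a b : ℕ) (ha : 1 ≤ a) (hab : a < b) (j : ℕ) :
    iotaMap (indS (Finset.Icc a (b - 1))) j =
      (if j = a then (1:ℝ) else 0) - (if j = b then 1 else 0) := by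
  simp only [iotaMap, indS, Finset.mem_Icc]
  split_ifs <;> first | omega | norm_num

lemma iota_union (U V : Finset ℕ) (hUV : Disjoint U V) (j : ℕ) :
    iotaMap (indS (U ∪ V)) j = iotaMap (indS U) j + iotaMap (indS V) j := by
  have key : ∀ i, indS (U ∪ V) i = indS U i + indS V i := by
    intro i
    by_cases hU : i ∈ U
    · have hV : i ∉ V := Finset.disjoint_left.1 hUV hU
      simp [indS, hU, hV]
    · simp [indS, Finset.mem_union, hU]
  simp only [iotaMap, key]; ring

lemma exists_matching (c d : ℕ) (Cs Ds : Finset ℕ) (hc : 1 ≤ c)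
    (N : ℕ) (S : Finset ℕ) (hcard : S.card ≤ N)
    (hS : Admissible c d Cs Ds S) :
    ∃ m : List (ℕ × ℕ),
      (∀ q ∈ m, q.1 ∈ insert c Cs ∧ q.2 ∈ insert (d + 1) Ds ∧ q.1 < q.2) ∧
      List.Chain' (fun q r => q.2 < r.1) m ∧
      (∀ q ∈ m, q.1 ∈ S) ∧
      iotaMap (indS S) = chiVec m := by
  induction N generalizing S with
  | zero =>
      have : S = ∅ := Finset.card_eq_zero.1 (Nat.le_zero.1 hcard)
      subst this
      refine ⟨[], by simp, List.isChain_nil, by simp, ?_⟩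
      funext j; simp [iotaMap, indS, chiVec]
  | succ N ih =>
      rcases eq_or_ne S ∅ with rfl | hne
      · refine ⟨[], by simp, List.isChain_nil, by simp, ?_⟩
        funext j; simp [iotaMap, indS, chiVec]
      have hne' : S.Nonempty := Finset.nonempty_iff_ne_empty.2 hne
      set a := S.min' hne' with ha_def
      have haS : a ∈ S := S.min'_mem hne'
      have haIcc : c ≤ a ∧ a ≤ d := Finset.mem_Icc.1 (hS.1 haS)
      have hex : ∃ k, a + k + 1 ∉ S := by
        refine ⟨d - a, fun h => ?_⟩
        have := Finset.mem_Icc.1 (hS.1 h); omega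
      set t := Nat.find hex with ht_def
      set b := a + t + 1 with hb_def
      have hbS : b ∉ S := Nat.find_spec hex
      have hrun : ∀ j, a ≤ j → j < b → j ∈ S := by
        intro j hj1 hj2
        rcases eq_or_lt_of_le hj1 with rfl | hj
        · exact haS
        · have hlt : j - a - 1 < t := by omega
          have := Nat.find_min hex hlt
          have : a + (j - a - 1) + 1 ∈ S := not_not.1 this
          have hje : a + (j - a - 1) + 1 = j := by omega
          rwa [hje] at this
      have hbd : b ≤ d + 1 := by
        have : a + t ∈ S := hrun _ (by omega) (by omega)
        have := Finset.mem_Icc.1 (hS.1 this); omega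
      have ha_mem : a ∈ insert c Cs := by
        rcases eq_or_lt_of_le haIcc.1 with rfl | hca
        · exact Finset.mem_insert_self _ _
        · refine Finset.mem_insert_of_mem (hS.2.1 a hca haIcc.2 haS ?_)
          intro h
          have := S.min'_le _ h; omega
      have hb_mem : b ∈ insert (d + 1) Ds := by
        rcases eq_or_lt_of_le hbd with heq | hbd'
        · simp [heq]
        · refine Finset.mem_insert_of_mem ?_
          have h1 : a + t ∈ S := hrun _ (by omega) (by omega)
          have := hS.2.2 (a + t) (by omega) (by omega) h1 (by rwa [show a + t + 1 = b from rfl])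
          rwa [show a + t + 1 = b from rfl] at this
      set S' := S \ Finset.Icc a (b - 1) with hS'_def
      have hS'gt : ∀ i ∈ S', b < i := by
        intro i hi
        obtain ⟨hiS, hiI⟩ := Finset.mem_sdiff.1 hi
        rw [Finset.mem_Icc] at hiI
        have h1 : a ≤ i := S.min'_le _ hiS
        have h2 : i ≠ b := fun h => hbS (h ▸ hiS)
        omega
      have hS'sub : S' ⊆ S := Finset.sdiff_subset
      have hcard' : S'.card ≤ N := by
        have : S'.card < S.card := Finset.card_lt_card
          ⟨hS'sub, fun h => by
            have := Finset.mem_sdiff.1 (h haS)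
            exact this.2 (Finset.mem_Icc.2 ⟨le_refl a, by omega⟩)⟩
        omega
      have hS'adm : Admissible c d Cs Ds S' := by
        refine ⟨hS'sub.trans hS.1, ?_, ?_⟩
        · intro i h1 h2 h3 h4
          refine hS.2.1 i h1 h2 (hS'sub h3) ?_
          intro h5
          have hbi := hS'gt i h3
          have h7 : i - 1 ∈ Finset.Icc a (b - 1) := by
            by_contra h7
            exact h4 (Finset.mem_sdiff.2 ⟨h5, h7⟩)
          have := Finset.mem_Icc.1 h7; omega
        · intro i h1 h2 h3 h4
          refine hS.2.2 i h1 h2 (hS'sub h3) ?_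
          intro h5
          have hbi := hS'gt i h3
          have h7 : i + 1 ∈ Finset.Icc a (b - 1) := by
            by_contra h7
            exact h4 (Finset.mem_sdiff.2 ⟨h5, h7⟩)
          have := Finset.mem_Icc.1 h7; omega
      obtain ⟨m', hm'1, hm'2, hm'3, hm'4⟩ := ih S' hcard' hS'adm
      refine ⟨(a, b) :: m', ?_, ?_, ?_, ?_⟩
      · rintro q hq
        rcases List.mem_cons.1 hq with rfl | hq'
        · exact ⟨ha_mem, hb_mem, by omega⟩
        · exact hm'1 q hq'
      · refine List.isChain_cons.2 ⟨?_, hm'2⟩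
        intro q hq
        exact hS'gt _ (hm'3 q (List.mem_of_mem_head? hq))
      · rintro q hq
        rcases List.mem_cons.1 hq with rfl | hq'
        · exact haS
        · exact hS'sub (hm'3 q hq')
      · funext j
        have hdecomp : S = Finset.Icc a (b - 1) ∪ S' := by
          ext i
          simp only [hS'_def, Finset.mem_union, Finset.mem_sdiff, Finset.mem_Icc]
          constructor
          · intro h; tauto
          · rintro (h | h)
            · exact hrun i h.1 (by omega)
            · exact h.1
        have hdisj2 : Disjoint (Finset.Icc a (b - 1)) S' := by
          rw [Finset.disjoint_left]
          intro i hi hi'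
          have := hS'gt i hi'
          have := Finset.mem_Icc.1 hi
          omega
        rw [hdecomp, iota_union _ _ hdisj2, chiVec_cons,
          iota_ind_Icc a b (by omega) (by omega), hm'4]

lemma exists_set (c d : ℕ) (Cs Ds : Finset ℕ) (hc : 1 ≤ c) (hcd : c ≤ d)
    (hunion : Cs ∪ Ds = Finset.Icc (c + 1) d) :
    ∀ m : List (ℕ × ℕ),
      (∀ q ∈ m, q.1 ∈ insert c Cs ∧ q.2 ∈ insert (d + 1) Ds ∧ q.1 < q.2) →
      List.Chain' (fun q r => q.2 < r.1) m →
      ∃ S : Finset ℕ, Admissible c d Cs Ds S ∧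
        (∀ i ∈ S, ∃ q, m.head? = some q ∧ q.1 ≤ i) ∧
        iotaMap (indS S) = chiVec m := by
  have hCs : ∀ x ∈ Cs, c + 1 ≤ x ∧ x ≤ d := by
    intro x hx
    have : x ∈ Finset.Icc (c + 1) d := hunion ▸ Finset.mem_union_left _ hx
    exact Finset.mem_Icc.1 this
  have hDs : ∀ x ∈ Ds, c + 1 ≤ x ∧ x ≤ d := by
    intro x hx
    have : x ∈ Finset.Icc (c + 1) d := hunion ▸ Finset.mem_union_right _ hx
    exact Finset.mem_Icc.1 this
  intro m
  induction m with
  | nil =>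
      intro _ _
      refine ⟨∅, ⟨by simp, by simp, by simp⟩, by simp, ?_⟩
      funext j; simp [iotaMap, indS, chiVec]
  | cons q m' ih =>
      obtain ⟨a, b⟩ := q
      intro hmem hchain
      obtain ⟨ha_mem, hb_mem, hab⟩ := hmem (a, b) List.mem_cons_self
      have ha : c ≤ a ∧ a ≤ d := by
        rcases Finset.mem_insert.1 ha_mem with rfl | h
        · exact ⟨le_refl _, hcd⟩
        · have := hCs a h; omega
      have hb : c + 1 ≤ b ∧ b ≤ d + 1 := by
        rcases Finset.mem_insert.1 hb_mem with rfl | h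
        · omega
        · have := hDs b h; omega
      obtain ⟨S', hS'adm, hS'bd, hS'eq⟩ :=
        ih (fun q hq => hmem q (List.mem_cons_of_mem _ hq)) hchain.tail
      have hS'gt : ∀ i ∈ S', b < i := by
        intro i hi
        obtain ⟨q', hq', hle⟩ := hS'bd i hi
        have := List.isChain_cons.1 hchain
        have hblt := this.1 q' hq'
        omega
      set S : Finset ℕ := Finset.Icc a (b - 1) ∪ S' with hS_def
      have hdisj2 : Disjoint (Finset.Icc a (b - 1)) S' := by
        rw [Finset.disjoint_left]
        intro i hi hi'
        have := hS'gt i hi'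
        have := Finset.mem_Icc.1 hi
        omega
      refine ⟨S, ⟨?_, ?_, ?_⟩, ?_, ?_⟩
      · intro i hi
        rcases Finset.mem_union.1 hi with h | h
        · have := Finset.mem_Icc.1 h
          exact Finset.mem_Icc.2 ⟨by omega, by omega⟩
        · exact hS'adm.1 h
      · intro i h1 h2 h3 h4
        rcases Finset.mem_union.1 h3 with h | h
        · have hiI := Finset.mem_Icc.1 h
          have hia : i = a := by
            by_contra hne
            exact h4 (Finset.mem_union_left _ (Finset.mem_Icc.2 ⟨by omega, by omega⟩))
          rcases Finset.mem_insert.1 ha_mem with h' | h'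
          · omega
          · exact hia ▸ h'
        · refine hS'adm.2.1 i h1 h2 h ?_
          intro h5
          exact h4 (Finset.mem_union_right _ h5)
      · intro i h1 h2 h3 h4
        rcases Finset.mem_union.1 h3 with h | h
        · have hiI := Finset.mem_Icc.1 h
          have hib : i = b - 1 := by
            by_contra hne
            exact h4 (Finset.mem_union_left _ (Finset.mem_Icc.2 ⟨by omega, by omega⟩))
          have hib' : i + 1 = b := by omega
          rcases Finset.mem_insert.1 hb_mem with h' | h'
          · omega
          · exact hib' ▸ h'
        · refine hS'adm.2.2 i h1 h2 h ?_
          intro h5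
          exact h4 (Finset.mem_union_right _ h5)
      · intro i hi
        refine ⟨(a, b), rfl, ?_⟩
        rcases Finset.mem_union.1 hi with h | h
        · exact (Finset.mem_Icc.1 h).1
        · have := hS'gt i h; omega
      · funext j
        rw [hS_def, iota_union _ _ hdisj2, chiVec_cons,
          iota_ind_Icc a b (by omega) hab, hS'eq]

lemma sum_iota (x : ℕ → ℝ) (h0 : x 0 = 0) (j : ℕ) :
    x j = ∑ i ∈ Finset.range (j + 1), iotaMap x i := by
  induction j with
  | zero => simp [iotaMap, h0]
  | succ j ih =>
      rw [Finset.sum_range_succ, ← ih]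
      simp [iotaMap]

/-- `S ↦ ι(1_S)` is a bijection from admissible subsets onto the
characteristic vectors of alternating matchings of the arc `(c, d+1, C, D)`;
consequently `ι` maps the Harder–Narasimhan polytope `conv{1_S}` onto the shard
polytope `SP(c, d+1, C, D)`. -/
theorem statement13 (n c d : ℕ) (Cs Ds : Finset ℕ)
    (hn : 1 ≤ n) (hc : 1 ≤ c) (hcd : c ≤ d) (hdn : d ≤ n)
    (hdisj : Disjoint Cs Ds) (hunion : Cs ∪ Ds = Finset.Icc (c + 1) d) :
    Set.BijOn (fun S => iotaMap (indS S))
      {S : Finset ℕ | Admissible c d Cs Ds S}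
      {x : ℕ → ℝ | ∃ m : List (ℕ × ℕ), IsAltMatching c (d + 1) Cs Ds m ∧ x = chiVec m} ∧
    iotaMap ''
        (convexHull ℝ {x : ℕ → ℝ | ∃ S : Finset ℕ, Admissible c d Cs Ds S ∧ x = indS S})
      = convexHull ℝ
          {x : ℕ → ℝ | ∃ m : List (ℕ × ℕ), IsAltMatching c (d + 1) Cs Ds m ∧ x = chiVec m} := by
  have hCs : ∀ x ∈ Cs, c + 1 ≤ x ∧ x ≤ d := by
    intro x hx
    have : x ∈ Finset.Icc (c + 1) d := hunion ▸ Finset.mem_union_left _ hx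
    exact Finset.mem_Icc.1 this
  have hDs : ∀ x ∈ Ds, c + 1 ≤ x ∧ x ≤ d := by
    intro x hx
    have : x ∈ Finset.Icc (c + 1) d := hunion ▸ Finset.mem_union_right _ hx
    exact Finset.mem_Icc.1 this
  have hmaps : Set.MapsTo (fun S => iotaMap (indS S))
      {S : Finset ℕ | Admissible c d Cs Ds S}
      {x : ℕ → ℝ | ∃ m : List (ℕ × ℕ), IsAltMatching c (d + 1) Cs Ds m ∧ x = chiVec m} := by
    intro S hS
    obtain ⟨m, h1, h2, h3, h4⟩ := exists_matching c d Cs Ds hc S.card S le_rfl hS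
    refine ⟨m, ⟨h1, h2, ?_, ?_⟩, h4⟩
    · intro q hq
      have hq' := List.mem_of_mem_head? hq
      rcases Finset.mem_insert.1 (h1 q hq').1 with h | h
      · omega
      · have := hCs _ h; omega
    · intro q hq
      have hq' := List.mem_of_mem_getLast? hq
      rcases Finset.mem_insert.1 (h1 q hq').2.1 with h | h
      · omega
      · have := hDs _ h; omega
  have hinj : Set.InjOn (fun S => iotaMap (indS S))
      {S : Finset ℕ | Admissible c d Cs Ds S} := by
    intro S hS T hT heq
    have h0S : indS S 0 = 0 := by
      simp only [indS, ite_eq_right_iff]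
      intro h
      have := Finset.mem_Icc.1 (hS.1 h); omega
    have h0T : indS T 0 = 0 := by
      simp only [indS, ite_eq_right_iff]
      intro h
      have := Finset.mem_Icc.1 (hT.1 h); omega
    have hind : indS S = indS T := by
      funext j
      rw [sum_iota _ h0S j, show iotaMap (indS S) = iotaMap (indS T) from heq,
        ← sum_iota _ h0T j]
    ext i
    have := congrFun hind i
    simp only [indS] at this
    by_cases hiS : i ∈ S <;> by_cases hiT : i ∈ T <;> simp_all
  have hsurj : Set.SurjOn (fun S => iotaMap (indS S))
      {S : Finset ℕ | Admissible c d Cs Ds S}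
      {x : ℕ → ℝ | ∃ m : List (ℕ × ℕ), IsAltMatching c (d + 1) Cs Ds m ∧ x = chiVec m} := by
    rintro x ⟨m, hm, rfl⟩
    obtain ⟨S, hadm, _, heq⟩ := exists_set c d Cs Ds hc hcd hunion m hm.1 hm.2.1
    exact ⟨S, hadm, heq⟩
  refine ⟨⟨hmaps, hinj, hsurj⟩, ?_⟩
  have hlin : IsLinearMap ℝ iotaMap :=
    ⟨fun x y => by funext j; simp only [iotaMap, Pi.add_apply]; ring,
     fun r x => by funext j; simp only [iotaMap, Pi.smul_apply, smul_eq_mul]; ring⟩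
  rw [hlin.image_convexHull]
  congr 1
  ext x
  constructor
  · rintro ⟨y, ⟨S, hSadm, rfl⟩, rfl⟩
    exact hmaps hSadm
  · intro hx
    obtain ⟨S, hSadm, hxe⟩ := hsurj hx
    exact ⟨indS S, ⟨S, hSadm, rfl⟩, hxe⟩

end PaperDKK
end
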